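/- Let A be an integral domain and B a field with A ⊆ B. Let C be a domain with A[X] ⊆ C ⊆ A + X·B[X] (as subrings of B[X]). Suppose that for each n ∈ ℕ there exists a nonzero element a_n ∈ A such that a_n·f ∈ A[X] for every f ∈ C with deg f ≤ n. Then C satisfies ACCP if and only if A satisfies ACCP. -/
import Mathlib


/-- The polynomial composite `A + X·B[X]`: the subring of `B[X]` of polynomials
whose constant coefficient lies in `A`. -/
def Subring.composite {B : Type*} [CommRing B] (A : Subring B) : Subring (Polynomial B) where
  carrier := {f : Polynomial B | f.coeff 0 ∈ A}
  mul_mem' {f g} hf hg := by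
    simp only [Set.mem_setOf_eq, Polynomial.mul_coeff_zero] at *
    exact mul_mem hf hg
  one_mem' := by
    simp only [Set.mem_setOf_eq, Polynomial.coeff_one_zero]
    exact one_mem A
  add_mem' {f g} hf hg := by
    simp only [Set.mem_setOf_eq, Polynomial.coeff_add] at *
    exact add_mem hf hg
  zero_mem' := by
    simp only [Set.mem_setOf_eq, Polynomial.coeff_zero]
    exact zero_mem A
  neg_mem' {f} hf := by
    simp only [Set.mem_setOf_eq, Polynomial.coeff_neg] at *
    exact neg_mem hf

theorem Subring.mem_composite {B : Type*} [CommRing B] (A : Subring B) (f : Polynomial B) :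
    f ∈ A.composite ↔ f.coeff 0 ∈ A := Iff.rfl

/-- The subring `A[X]` of `B[X]`: polynomials all of whose coefficients lie in `A`. -/
def Subring.polynomialSubring {B : Type*} [CommRing B] (A : Subring B) :
    Subring (Polynomial B) where
  carrier := {f : Polynomial B | ∀ i, f.coeff i ∈ A}
  mul_mem' {f g} hf hg := by
    intro i
    rw [Polynomial.coeff_mul]
    exact sum_mem fun x _ => mul_mem (hf x.1) (hg x.2)
  one_mem' := by
    intro i
    rw [Polynomial.coeff_one]
    split
    · exact one_mem _
    · exact zero_mem _
  add_mem' {f g} hf hg := by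
    intro i
    rw [Polynomial.coeff_add]
    exact add_mem (hf i) (hg i)
  zero_mem' := by
    intro i
    rw [Polynomial.coeff_zero]
    exact zero_mem _
  neg_mem' {f} hf := by
    intro i
    rw [Polynomial.coeff_neg]
    exact neg_mem (hf i)

/-- A commutative ring satisfies ACCP if every ascending chain of principal ideals
stabilizes. -/
def SatisfiesACCP (R : Type*) [CommRing R] : Prop :=
  ∀ I : ℕ → Ideal R, (∀ k, (I k).IsPrincipal) → (∀ k, I k ≤ I (k + 1)) →
    ∃ N, ∀ k, N ≤ k → I k = I N

/-- Let `A` be an integral domain and `B` a field with `A ⊆ B`, and let `C` be a domain with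
`A[X] ⊆ C ⊆ A + X·B[X]`. If for each `n` there is a nonzero `a_n ∈ A` with `a_n·f ∈ A[X]`
for every `f ∈ C` of degree at most `n`, then `C` satisfies ACCP iff `A` satisfies ACCP. -/
lemma constC_mem {B : Type*} [CommRing B] (A : Subring B) {c : B} (hc : c ∈ A) :
    Polynomial.C c ∈ A.polynomialSubring := by
  intro i
  rw [Polynomial.coeff_C]
  split
  · exact hc
  · exact zero_mem A

theorem composite_intermediate_accp_iff {B : Type*} [Field B] (A : Subring B)
    (C : Subring (Polynomial B))
    (hC1 : A.polynomialSubring ≤ C) (hC2 : C ≤ A.composite)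
    (h : ∀ n : ℕ, ∃ a : B, a ∈ A ∧ a ≠ 0 ∧
      ∀ f ∈ C, f.natDegree ≤ n → Polynomial.C a * f ∈ A.polynomialSubring) :
    SatisfiesACCP C ↔ SatisfiesACCP A := by
  constructor
  · -- C ACCP → A ACCP
    intro hc I hp hasc
    have hmono : ∀ j k : ℕ, j ≤ k → I j ≤ I k := by
      intro j k hjk
      induction hjk with
      | refl => exact le_rfl
      | step _ ih => exact ih.trans (hasc _)
    choose a ha using fun k => (hp k).principal
    let e : ↥A →+* ↥C := (Polynomial.C.comp A.subtype).codRestrict C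
      (fun x => hC1 (constC_mem A x.2))
    have he : ∀ x : ↥A, ((e x : ↥C) : Polynomial B) = Polynomial.C (x : B) := fun x => rfl
    set J : ℕ → Ideal ↥C := fun k => Ideal.span {e (a k)} with hJ
    have hJp : ∀ k, (J k).IsPrincipal := fun k => ⟨⟨_, rfl⟩⟩
    have hdvd : ∀ k, a (k + 1) ∣ a k := by
      intro k
      have h1 := hasc k
      rw [ha k, ha (k + 1)] at h1
      exact Ideal.span_singleton_le_span_singleton.mp h1
    have hJasc : ∀ k, J k ≤ J (k + 1) :=
      fun k => Ideal.span_singleton_le_span_singleton.mpr (map_dvd e (hdvd k))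
    obtain ⟨N, hN⟩ := hc J hJp hJasc
    refine ⟨N, fun k hk => ?_⟩
    refine le_antisymm ?_ (hmono N k hk)
    have hed : e (a N) ∣ e (a k) :=
      Ideal.span_singleton_le_span_singleton.mp (hN k hk).le
    obtain ⟨g, hg⟩ := hed
    have hg0 : (g : Polynomial B).coeff 0 ∈ A := hC2 g.2
    have hak : a N ∣ a k := by
      refine ⟨⟨(g : Polynomial B).coeff 0, hg0⟩, ?_⟩
      apply Subtype.ext
      have h1 := congrArg (fun x : ↥C => (x : Polynomial B).coeff 0) hg
      simpa [he, Polynomial.coeff_C_mul, Polynomial.mul_coeff_zero] using h1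
    rw [ha k, ha N]
    exact Ideal.span_singleton_le_span_singleton.mpr hak
  · -- A ACCP → C ACCP
    intro hA I hp hasc
    have hmono : ∀ j k : ℕ, j ≤ k → I j ≤ I k := by
      intro j k hjk
      induction hjk with
      | refl => exact le_rfl
      | step _ ih => exact ih.trans (hasc _)
    choose f hf using fun k => (hp k).principal
    have hdvd : ∀ k, f (k + 1) ∣ f k := by
      intro k
      have h1 := hasc k
      rw [hf k, hf (k + 1)] at h1
      exact Ideal.span_singleton_le_span_singleton.mp h1
    by_cases h0 : ∀ k, f k = 0
    · refine ⟨0, fun k _ => ?_⟩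
      rw [hf k, hf 0, h0 k, h0 0]
    · push_neg at h0
      obtain ⟨K, hK⟩ := h0
      have hne : ∀ k, K ≤ k → f k ≠ 0 := by
        intro k hk
        induction hk with
        | refl => exact hK
        | step _ ih =>
          obtain ⟨g, hg⟩ := hdvd _
          exact fun hz => ih (by rw [hg, hz, zero_mul])
      have hnec : ∀ k, K ≤ k → (f k : Polynomial B) ≠ 0 := by
        intro k hk hz
        exact hne k hk (Subtype.ext hz)
      set d : ℕ → ℕ := fun k => (f k : Polynomial B).natDegree with hd
      have hdstep : ∀ k, K ≤ k → d (k + 1) ≤ d k := by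
        intro k hk
        obtain ⟨g, hg⟩ := hdvd k
        have h1 : (f k : Polynomial B) = (f (k + 1) : Polynomial B) * (g : Polynomial B) := by
          rw [hg]; push_cast; ring
        have hg0 : (g : Polynomial B) ≠ 0 := by
          intro hz
          exact hnec k hk (by rw [h1, hz, mul_zero])
        have := Polynomial.natDegree_mul (hnec (k + 1) (hk.trans (Nat.le_succ k))) hg0
        rw [hd]
        simp only []
        rw [h1, this]
        omega
      have hdmono : ∀ j k, K ≤ j → j ≤ k → d k ≤ d j := by
        intro j k hKj hjk
        induction hjk with
        | refl => exact le_rfl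
        | step hm ih => exact (hdstep _ (hKj.trans hm)).trans ih
      obtain ⟨j0, hj0⟩ := Nat.sInf_mem (⟨d (K + 0), ⟨0, rfl⟩⟩ :
        (Set.range fun j => d (K + j)).Nonempty)
      set M := K + j0 with hM
      have hKM : K ≤ M := Nat.le_add_right K j0
      have hdM : ∀ k, M ≤ k → d k = d M := by
        intro k hk
        refine le_antisymm (hdmono M k hKM hk) ?_
        have h2 : d k ∈ Set.range fun j => d (K + j) :=
          ⟨k - K, show d (K + (k - K)) = d k by rw [Nat.add_sub_cancel' (hKM.trans hk)]⟩
        have h3 : d M = sInf (Set.range fun j => d (K + j)) := hj0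
        rw [h3]
        exact Nat.sInf_le h2
      set dd := d M with hdd
      obtain ⟨a, haA, ha0, haf⟩ := h dd
      have hbmem : ∀ j, a * ((f (M + j) : Polynomial B).coeff dd) ∈ A := by
        intro j
        have h2 := haf (f (M + j)) (f (M + j)).2
          (le_of_eq (hdM (M + j) (Nat.le_add_right _ _)))
        have h3 := h2 dd
        simpa [Polynomial.coeff_C_mul] using h3
      set b : ℕ → ↥A := fun j => ⟨a * ((f (M + j) : Polynomial B).coeff dd), hbmem j⟩ with hb
      have hbne : ∀ j, b j ≠ 0 := by
        intro j hz
        have h1 : a * ((f (M + j) : Polynomial B).coeff dd) = 0 := congrArg Subtype.val hz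
        have h2 : (f (M + j) : Polynomial B).coeff dd ≠ 0 := by
          have hdj : (f (M + j) : Polynomial B).natDegree = dd := hdM (M + j) (Nat.le_add_right _ _)
          rw [← hdj]
          exact Polynomial.leadingCoeff_ne_zero.mpr (hnec (M + j) (hKM.trans (Nat.le_add_right _ _)))
        exact h2 ((mul_eq_zero.mp h1).resolve_left ha0)
      choose g hg using fun j => hdvd (M + j)
      have hcoe : ∀ j, (f (M + j) : Polynomial B) =
          (f (M + j + 1) : Polynomial B) * (g j : Polynomial B) := by
        intro j
        rw [hg j]; push_cast; ring
      have hgne : ∀ j, (g j : Polynomial B) ≠ 0 := by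
        intro j hz
        exact hnec (M + j) (hKM.trans (Nat.le_add_right _ _)) (by rw [hcoe j, hz, mul_zero])
      have hgdeg : ∀ j, (g j : Polynomial B).natDegree = 0 := by
        intro j
        have h1 := Polynomial.natDegree_mul
          (hnec (M + j + 1) (hKM.trans ((Nat.le_add_right M j).trans (Nat.le_succ _)))) (hgne j)
        have h2 : d (M + j) = dd := hdM (M + j) (Nat.le_add_right _ _)
        have h3 : d (M + j + 1) = dd := hdM (M + j + 1) ((Nat.le_add_right _ _).trans (Nat.le_succ _))
        have h4 : d (M + j) = d (M + j + 1) + (g j : Polynomial B).natDegree := by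
          rw [hd]; simp only []; rw [hcoe j, h1]
        omega
      have hgC : ∀ j, (g j : Polynomial B) =
          Polynomial.C ((g j : Polynomial B).coeff 0) := fun j =>
        Polynomial.eq_C_of_natDegree_eq_zero (hgdeg j)
      set c : ℕ → ↥A := fun j => ⟨(g j : Polynomial B).coeff 0, hC2 (g j).2⟩ with hcdef
      have hbstep : ∀ j, b j = b (j + 1) * c j := by
        intro j
        apply Subtype.ext
        show a * ((f (M + j) : Polynomial B).coeff dd) =
          (a * ((f (M + (j + 1)) : Polynomial B).coeff dd)) * ((g j : Polynomial B).coeff 0)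
        have h1 : (f (M + j) : Polynomial B).coeff dd =
            (f (M + j + 1) : Polynomial B).coeff dd * (g j : Polynomial B).coeff 0 := by
          conv_lhs => rw [hcoe j, hgC j]
          rw [Polynomial.coeff_mul_C]
        rw [h1]; ring_nf
      set J : ℕ → Ideal ↥A := fun j => Ideal.span {b j} with hJ
      obtain ⟨N', hN'⟩ := hA J (fun j => ⟨⟨_, rfl⟩⟩)
        (fun j => Ideal.span_singleton_le_span_singleton.mpr ⟨c j, hbstep j⟩)
      -- for j ≥ N', c j is a unit, hence I (M+j+1) = I (M+j)
      have hIstep : ∀ j, N' ≤ j → I (M + j + 1) = I (M + j) := by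
        intro j hj
        have hbd : b j ∣ b (j + 1) := by
          apply Ideal.span_singleton_le_span_singleton.mp
          show J (j + 1) ≤ J j
          rw [hN' (j + 1) (hj.trans (Nat.le_succ j)), hN' j hj]
          -- done
        obtain ⟨u, hu⟩ := hbd
        have hcu : c j * u = 1 := by
          apply mul_left_cancel₀ (hbne (j + 1))
          rw [mul_one, ← mul_assoc, ← hbstep j, ← hu]
        -- inverse of g j in C
        set gi : ↥C := ⟨Polynomial.C (u : B), hC1 (constC_mem A u.2)⟩ with hgi
        have hggi : g j * gi = 1 := by
          apply Subtype.ext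
          push_cast
          show (g j : Polynomial B) * Polynomial.C (u : B) = 1
          rw [hgC j, ← map_mul]
          have : (g j : Polynomial B).coeff 0 * (u : B) = 1 := by
            have := congrArg Subtype.val hcu
            push_cast at this
            exact this
          rw [this, map_one]
        have hfd : f (M + j) ∣ f (M + j + 1) := by
          refine ⟨gi, ?_⟩
          rw [hg j, mul_assoc, hggi, mul_one]
        refine le_antisymm ?_ (hasc (M + j))
        rw [hf (M + j + 1), hf (M + j)]
        exact Ideal.span_singleton_le_span_singleton.mpr hfd
      have hfinal : ∀ j, I (M + N' + j) = I (M + N') := by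
        intro j
        induction j with
        | zero => rfl
        | succ n ihn =>
          have hst := hIstep (N' + n) (Nat.le_add_right _ _)
          rw [show M + (N' + n) + 1 = M + N' + (n + 1) by ring,
            show M + (N' + n) = M + N' + n by ring] at hst
          rw [hst, ihn]
      refine ⟨M + N', fun k hk => ?_⟩
      have := hfinal (k - (M + N'))
      rwa [Nat.add_sub_cancel' hk] at this
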